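/- arXiv:1409.1065 — 6 statements merged into one kernel-verified Lean document; each statement's English description precedes it below -/
import Mathlib

section
/- Let f : [a,b] → ℝ be absolutely continuous with f'' ∈ L¹[a,b] and |f''| s-convex in the second sense on [a,b] for some s ∈ (0,1]. Then for every x ∈ (a,b): |f(x) + (f(a)+f(b))/2 - [(1/(x-a))∫_a^x f(t)dt + (1/(b-x))∫_x^b f(t)dt]| ≤ ((x-a)² + (b-x)²)/(2(s+2)(s+3))·|f''(x)| + (1/(2(s+2)(s+3)))·[(x-a)²|f''(a)| + (b-x)²|f''(b)|]. -/
open MeasureTheory Set intervalIntegral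
open scoped Interval

/-!
Integrating by parts twice gives, on each of `[a, x]` and `[x, b]`,
`(f c + f d) / 2 - (d - c)⁻¹ ∫_c^d f = (2 (d - c))⁻¹ ∫_c^d (t - c) (d - t) f''(t) dt`.
Writing `t = ((t - c) / (d - c)) d + ((d - t) / (d - c)) c`, s-convexity bounds `|f''(t)|`
pointwise, and both resulting weights integrate against `(t - c) (d - t)` to the Beta-type value
`(d - c) ^ 3 / ((s + 2) (s + 3))`. Adding the estimates for the two intervals gives the claim.
-/

/-- s-convexity in the second sense (Breckner). -/
def SConvexOn (s : ℝ) (I : Set ℝ) (g : ℝ → ℝ) : Prop :=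
  ∀ u ∈ I, ∀ v ∈ I, ∀ t ∈ Icc (0 : ℝ) 1,
    g (t * u + (1 - t) * v) ≤ t ^ s * g u + (1 - t) ^ s * g v

theorem integral_sub_mul_sub_mul_deriv_deriv {f f' f'' : ℝ → ℝ} {c d : ℝ}
    (hf' : ∀ t ∈ [[c, d]], HasDerivAt f (f' t) t)
    (hf'' : ∀ t ∈ [[c, d]], HasDerivAt f' (f'' t) t)
    (hint : IntervalIntegrable f'' volume c d) :
    ∫ t in c..d, (t - c) * (d - t) * f'' t = (d - c) * (f c + f d) - 2 * ∫ t in c..d, f t := by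
  have hw : ∀ t ∈ [[c, d]], HasDerivAt (fun t ↦ (t - c) * (d - t)) (c + d - 2 * t) t :=
    fun t _ ↦ (((hasDerivAt_id t).sub_const c).mul ((hasDerivAt_id t).const_sub d)).congr_deriv
      (by simp; ring)
  have hw' : ∀ t ∈ [[c, d]], HasDerivAt (fun t ↦ c + d - 2 * t) (-2) t := fun t _ ↦
    (((hasDerivAt_id t).const_mul 2).const_sub (c + d)).congr_deriv (by simp)
  have hf'_int : IntervalIntegrable f' volume c d :=
    ContinuousOn.intervalIntegrable fun t ht ↦ (hf'' t ht).continuousAt.continuousWithinAt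
  rw [integral_mul_deriv_eq_deriv_mul hw hf''
    ((by fun_prop : Continuous fun t : ℝ ↦ c + d - 2 * t).intervalIntegrable c d) hint,
    integral_mul_deriv_eq_deriv_mul hw' hf' intervalIntegrable_const hf'_int,
    intervalIntegral.integral_const_mul]
  ring

theorem integral_mul_one_sub_mul_rpow {s : ℝ} (hs : -1 < s) :
    ∫ v in (0 : ℝ)..1, v * (1 - v) * v ^ s = 1 / ((s + 2) * (s + 3)) := by
  have hpow : ∀ v ∈ [[(0 : ℝ), 1]], v * (1 - v) * v ^ s = v ^ (s + 1) - v ^ (s + 2) := by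
    intro v hv
    have hv0 : 0 ≤ v := by simp_all
    rw [Real.rpow_add' hv0 (by linarith), Real.rpow_add' hv0 (by linarith), Real.rpow_one,
      Real.rpow_two]
    ring
  rw [integral_congr hpow, integral_sub (intervalIntegrable_rpow' (by linarith))
    (intervalIntegrable_rpow' (by linarith)), integral_rpow (Or.inl (by linarith)),
    integral_rpow (Or.inl (by linarith))]
  rw [show s + 1 + 1 = s + 2 by ring, show s + 2 + 1 = s + 3 by ring,
    Real.zero_rpow (by linarith), Real.zero_rpow (by linarith), Real.one_rpow, Real.one_rpow]
  have : s + 2 ≠ 0 := by linarith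
  have : s + 3 ≠ 0 := by linarith
  field_simp
  ring

theorem integral_sub_mul_sub_mul_div_rpow {c d s : ℝ} (hcd : c ≠ d) (hs : -1 < s) :
    ∫ t in c..d, (t - c) * (d - t) * ((t - c) / (d - c)) ^ s
      = (d - c) ^ 3 / ((s + 2) * (s + 3)) := by
  have hdc : d - c ≠ 0 := sub_ne_zero.2 hcd.symm
  have hsub : ∀ v : ℝ, (c + (d - c) * v - c) * (d - (c + (d - c) * v))
      * ((c + (d - c) * v - c) / (d - c)) ^ s = (d - c) ^ 2 * (v * (1 - v) * v ^ s) := by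
    intro v
    rw [add_sub_cancel_left, mul_div_cancel_left₀ v hdc]
    ring
  have key := integral_comp_add_mul (fun t ↦ (t - c) * (d - t) * ((t - c) / (d - c)) ^ s) hdc c
    (a := 0) (b := 1)
  simp only [hsub, mul_zero, add_zero, mul_one, add_sub_cancel, smul_eq_mul,
    intervalIntegral.integral_const_mul, integral_mul_one_sub_mul_rpow hs] at key
  rw [eq_inv_mul_iff_mul_eq₀ hdc] at key
  rw [← key]
  ring

theorem integral_sub_mul_sub_mul_div_rpow' {c d s : ℝ} (hcd : c ≠ d) (hs : -1 < s) :
    ∫ t in c..d, (t - c) * (d - t) * ((d - t) / (d - c)) ^ s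
      = (d - c) ^ 3 / ((s + 2) * (s + 3)) := by
  have key := integral_comp_sub_left (fun t ↦ (t - c) * (d - t) * ((t - c) / (d - c)) ^ s) (c + d)
    (a := c) (b := d)
  simp only [add_sub_cancel_left, add_sub_cancel_right, integral_sub_mul_sub_mul_div_rpow hcd hs,
    show ∀ t, c + d - t - c = d - t from fun t ↦ by ring,
    show ∀ t, d - (c + d - t) = t - c from fun t ↦ by ring] at key
  rw [← key]
  congr 1 with t
  ring

theorem SConvexOn.le_of_mem_Icc {s : ℝ} {I : Set ℝ} {g : ℝ → ℝ} (hg : SConvexOn s I g)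
    {c d t : ℝ} (hc : c ∈ I) (hd : d ∈ I) (hcd : c < d) (ht : t ∈ Icc c d) :
    g t ≤ ((t - c) / (d - c)) ^ s * g d + ((d - t) / (d - c)) ^ s * g c := by
  have hdc : 0 < d - c := sub_pos.2 hcd
  have hτ : (t - c) / (d - c) ∈ Icc (0 : ℝ) 1 :=
    ⟨div_nonneg (by linarith [ht.1]) hdc.le, (div_le_one hdc).2 (by linarith [ht.2])⟩
  have h1τ : 1 - (t - c) / (d - c) = (d - t) / (d - c) := by field_simp; ring
  have hpt : (t - c) / (d - c) * d + (d - t) / (d - c) * c = t := by field_simp; ring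
  simpa only [h1τ, hpt] using hg d hd c hc _ hτ

theorem abs_integral_sub_mul_sub_mul_le {s : ℝ} {I : Set ℝ} {g : ℝ → ℝ}
    (hg : SConvexOn s I fun t ↦ |g t|) (hs : 0 ≤ s) {c d : ℝ} (hc : c ∈ I) (hd : d ∈ I)
    (hcd : c < d) (hint : IntervalIntegrable g volume c d) :
    |∫ t in c..d, (t - c) * (d - t) * g t|
      ≤ (d - c) ^ 3 / ((s + 2) * (s + 3)) * (|g c| + |g d|) := by
  have hw : Continuous fun t : ℝ ↦ (t - c) * (d - t) := by fun_prop
  have hk₁ :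
      IntervalIntegrable (fun t ↦ (t - c) * (d - t) * ((t - c) / (d - c)) ^ s) volume c d :=
    (hw.mul ((by fun_prop : Continuous fun t : ℝ ↦ (t - c) / (d - c)).rpow_const
      fun _ ↦ Or.inr hs)).intervalIntegrable c d
  have hk₂ :
      IntervalIntegrable (fun t ↦ (t - c) * (d - t) * ((d - t) / (d - c)) ^ s) volume c d :=
    (hw.mul ((by fun_prop : Continuous fun t : ℝ ↦ (d - t) / (d - c)).rpow_const
      fun _ ↦ Or.inr hs)).intervalIntegrable c d
  calc |∫ t in c..d, (t - c) * (d - t) * g t|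
      ≤ ∫ t in c..d, |(t - c) * (d - t) * g t| := abs_integral_le_integral_abs hcd.le
    _ ≤ ∫ t in c..d, ((t - c) * (d - t) * ((t - c) / (d - c)) ^ s * |g d|
          + (t - c) * (d - t) * ((d - t) / (d - c)) ^ s * |g c|) := by
        refine integral_mono_on hcd.le (hint.continuousOn_mul hw.continuousOn).abs
          ((hk₁.mul_const _).add (hk₂.mul_const _)) fun t ht ↦ ?_
        have hw₀ : 0 ≤ (t - c) * (d - t) := mul_nonneg (by linarith [ht.1]) (by linarith [ht.2])
        rw [abs_mul, abs_of_nonneg hw₀]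
        linear_combination (mul_le_mul_of_nonneg_left (hg.le_of_mem_Icc hc hd hcd ht) hw₀)
    _ = (d - c) ^ 3 / ((s + 2) * (s + 3)) * (|g c| + |g d|) := by
        rw [integral_add (hk₁.mul_const _) (hk₂.mul_const _),
          intervalIntegral.integral_mul_const, intervalIntegral.integral_mul_const,
          integral_sub_mul_sub_mul_div_rpow hcd.ne (by linarith),
          integral_sub_mul_sub_mul_div_rpow' hcd.ne (by linarith)]
        ring

theorem abs_add_div_two_sub_average_le {f f' f'' : ℝ → ℝ} {s : ℝ} {I : Set ℝ}
    (hg : SConvexOn s I fun t ↦ |f'' t|) (hs : 0 ≤ s) {c d : ℝ} (hc : c ∈ I) (hd : d ∈ I)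
    (hcd : c < d) (hf' : ∀ t ∈ Icc c d, HasDerivAt f (f' t) t)
    (hf'' : ∀ t ∈ Icc c d, HasDerivAt f' (f'' t) t) (hint : IntegrableOn f'' (Icc c d)) :
    |(f c + f d) / 2 - (d - c)⁻¹ * ∫ t in c..d, f t|
      ≤ (d - c) ^ 2 / (2 * (s + 2) * (s + 3)) * (|f'' c| + |f'' d|) := by
  rw [← uIcc_of_le hcd.le] at hf' hf'' hint
  have hparts := integral_sub_mul_sub_mul_deriv_deriv hf' hf'' hint.intervalIntegrable
  have hbound := abs_integral_sub_mul_sub_mul_le hg hs hc hd hcd hint.intervalIntegrable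
  have hdc : 0 < d - c := sub_pos.2 hcd
  have hrepr : (f c + f d) / 2 - (d - c)⁻¹ * ∫ t in c..d, f t
      = (∫ t in c..d, (t - c) * (d - t) * f'' t) / (2 * (d - c)) := by
    rw [hparts]
    field_simp
  rw [hrepr, abs_div, abs_of_pos (by positivity : 0 < 2 * (d - c)), div_le_iff₀ (by positivity)]
  exact hbound.trans_eq (by field_simp)

theorem sconvex_alpha_beta_one (f f' f'' : ℝ → ℝ) (a b x s : ℝ)
    (hax : a < x) (hxb : x < b)
    (hs : s ∈ Set.Ioc (0:ℝ) 1)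
    (hf' : ∀ t ∈ Set.Icc a b, HasDerivAt f (f' t) t)
    (hf'' : ∀ t ∈ Set.Icc a b, HasDerivAt f' (f'' t) t)
    (hint : IntegrableOn f'' (Set.Icc a b))
    (hsc : ∀ u ∈ Set.Icc a b, ∀ v ∈ Set.Icc a b, ∀ t ∈ Set.Icc (0:ℝ) 1,
        |f'' (t * u + (1 - t) * v)| ≤ t ^ s * |f'' u| + (1 - t) ^ s * |f'' v|) :
    |f x + (f a + f b) / 2
        - (1 / (x - a) * ∫ t in a..x, f t + 1 / (b - x) * ∫ t in x..b, f t)|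
      ≤ ((x - a) ^ 2 + (b - x) ^ 2) / (2 * (s + 2) * (s + 3)) * |f'' x|
        + 1 / (2 * (s + 2) * (s + 3))
            * ((x - a) ^ 2 * |f'' a| + (b - x) ^ 2 * |f'' b|) := by
  have ha : a ∈ Icc a b := ⟨le_rfl, (hax.trans hxb).le⟩
  have hx : x ∈ Icc a b := ⟨hax.le, hxb.le⟩
  have hb : b ∈ Icc a b := ⟨(hax.trans hxb).le, le_rfl⟩
  have hsub_ax : Icc a x ⊆ Icc a b := Icc_subset_Icc_right hxb.le
  have hsub_xb : Icc x b ⊆ Icc a b := Icc_subset_Icc_left hax.le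
  have h_ax := abs_add_div_two_sub_average_le hsc hs.1.le ha hx hax
    (fun t ht ↦ hf' t (hsub_ax ht)) (fun t ht ↦ hf'' t (hsub_ax ht)) (hint.mono_set hsub_ax)
  have h_xb := abs_add_div_two_sub_average_le hsc hs.1.le hx hb hxb
    (fun t ht ↦ hf' t (hsub_xb ht)) (fun t ht ↦ hf'' t (hsub_xb ht)) (hint.mono_set hsub_xb)
  -- The binder of the first `∫` extends over the second summand.
  have hsplit : (∫ t in a..x, f t + 1 / (b - x) * ∫ t in x..b, f t)
      = (∫ t in a..x, f t) + (x - a) * (1 / (b - x) * ∫ t in x..b, f t) := by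
    rw [integral_add _ intervalIntegrable_const, intervalIntegral.integral_const, smul_eq_mul]
    exact ContinuousOn.intervalIntegrable_of_Icc hax.le fun t ht ↦
      (hf' t (hsub_ax ht)).continuousAt.continuousWithinAt
  have hxa : x - a ≠ 0 := (sub_pos.2 hax).ne'
  have hbx : b - x ≠ 0 := (sub_pos.2 hxb).ne'
  calc _ = |((f a + f x) / 2 - (x - a)⁻¹ * ∫ t in a..x, f t)
        + ((f x + f b) / 2 - (b - x)⁻¹ * ∫ t in x..b, f t)| := by
        rw [hsplit]
        congr 1
        field_simp
        ring
    _ ≤ _ := (abs_add_le _ _).trans (add_le_add h_ax h_xb)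
    _ = _ := by ring
end

section
/- Let f : [a,b] → ℝ be absolutely continuous with f'' ∈ L¹[a,b], and suppose |f''| is positive and log-convex on [a,b]. Let κ₁ = (|f''((a+b)/2)|/|f''(a)|)^{2/(b-a)} and τ₁ = (|f''(b)|/|f''((a+b)/2)|)^{2/(b-a)}, with κ₁ ≠ 1, τ₁ ≠ 1. Then the Bullen-type inequality holds: |(1/2)[f((a+b)/2) + (f(a)+f(b))/2] - (1/(b-a))∫_a^b f(t)dt| ≤ (|f''(a)|^{(a+b)/2}/|f''((a+b)/2)|^a)^{2/(b-a)}·(κ₁^a - κ₁^{(a+b)/2} + ((b-a)/4)(κ₁^a + κ₁^{(a+b)/2})log κ₁)/((b-a)log³ κ₁) + (|f''((a+b)/2)|^b/|f''(b)|^{(a+b)/2})^{2/(b-a)}·(τ₁^{(a+b)/2} - τ₁^b + ((b-a)/4)(τ₁^b + τ₁^{(a+b)/2})log τ₁)/((b-a)log³ τ₁). -/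
/-!
Integrating by parts twice, the Bullen error equals `1 / (2 (b - a))` times the sum, over the
two halves `[c, d]` of `[a, b]`, of `∫_c^d (t - c) (d - t) f''(t) dt` (twice the trapezoid error
of each half). On each half, log-convexity of `|f''|` bounds it by the exponential
`|f''(c)|^((d-t)/(d-c)) |f''(d)|^((t-c)/(d-c)) = A K^t`, and the quadratic weight against `K^t`
integrates in closed form.
-/

open MeasureTheory Set intervalIntegral Real

theorem trapezoid_error_eq_integral_mul_deriv2 {f f' f'' : ℝ → ℝ} {c d : ℝ} (hcd : c ≤ d)
    (hf' : ∀ t ∈ Icc c d, HasDerivAt f (f' t) t)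
    (hf'' : ∀ t ∈ Icc c d, HasDerivAt f' (f'' t) t)
    (hint : IntervalIntegrable f'' volume c d) :
    (d - c) * (f c + f d) - 2 * ∫ t in c..d, f t = ∫ t in c..d, (t - c) * (d - t) * f'' t := by
  rw [← uIcc_of_le hcd] at hf' hf''
  have hbump (t : ℝ) : HasDerivAt (fun t => (t - c) * (d - t)) (c + d - 2 * t) t := by
    refine (((hasDerivAt_id t).sub_const c).mul ((hasDerivAt_id t).const_sub d)).congr_deriv ?_
    simp only [id]
    ring
  have hslope (t : ℝ) : HasDerivAt (fun t => c + d - 2 * t) (-2) t := by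
    simpa using ((hasDerivAt_id t).const_mul 2).const_sub (c + d)
  have hf'cont : ContinuousOn f' (uIcc c d) := fun t ht =>
    (hf'' t ht).continuousAt.continuousWithinAt
  rw [integral_mul_deriv_eq_deriv_mul (fun t _ => hbump t) hf''
      (Continuous.intervalIntegrable (by fun_prop) _ _) hint,
    integral_mul_deriv_eq_deriv_mul (fun t _ => hslope t) hf'
      (Continuous.intervalIntegrable (by fun_prop) _ _) hf'cont.intervalIntegrable,
    intervalIntegral.integral_const_mul]
  ring

theorem integral_sub_mul_sub_mul_rpow {K : ℝ} (c d : ℝ) (hK : 0 < K) (hK1 : K ≠ 1) :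
    ∫ t in c..d, (t - c) * (d - t) * K ^ t
      = (2 * (K ^ c - K ^ d) + (d - c) * (K ^ c + K ^ d) * log K) / log K ^ 3 := by
  have hL : log K ≠ 0 := log_ne_zero_of_pos_of_ne_one hK hK1
  have hprim (t : ℝ) : HasDerivAt
      (fun t => K ^ t * ((t - c) * (d - t) / log K - (c + d - 2 * t) / log K ^ 2 - 2 / log K ^ 3))
      ((t - c) * (d - t) * K ^ t) t := by
    have hpoly : HasDerivAt
        (fun t => (t - c) * (d - t) / log K - (c + d - 2 * t) / log K ^ 2 - 2 / log K ^ 3)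
        ((c + d - 2 * t) / log K + 2 / log K ^ 2) t := by
      have := ((((hasDerivAt_id t).sub_const c).mul ((hasDerivAt_id t).const_sub d)).div_const
        (log K)).sub ((((hasDerivAt_id t).const_mul 2).const_sub (c + d)).div_const (log K ^ 2))
        |>.sub_const (2 / log K ^ 3)
      refine this.congr_deriv ?_
      simp only [id]
      ring
    refine ((hasStrictDerivAt_const_rpow hK t).hasDerivAt.mul hpoly).congr_deriv ?_
    field_simp
    ring
  rw [integral_eq_sub_of_hasDerivAt (fun t _ => hprim t)
    (Continuous.intervalIntegrable (by fun_prop (disch := exact hK.ne')) _ _)]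
  field_simp
  ring

theorem rpow_div_mul_rpow_div_eq {x y : ℝ} (c d t : ℝ) (hx : 0 < x) (hy : 0 < y) (hcd : c ≠ d) :
    x ^ ((d - t) / (d - c)) * y ^ ((t - c) / (d - c))
      = (x ^ d / y ^ c) ^ (1 / (d - c)) * ((y / x) ^ (1 / (d - c))) ^ t := by
  obtain ⟨X, rfl⟩ : ∃ X, exp X = x := ⟨log x, exp_log hx⟩
  obtain ⟨Y, rfl⟩ : ∃ Y, exp Y = y := ⟨log y, exp_log hy⟩
  simp only [← exp_mul, ← exp_sub, ← exp_add]
  congr 1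
  field_simp [sub_ne_zero.mpr hcd.symm]
  ring

theorem le_mul_rpow_of_logConvex {g : ℝ → ℝ} {c d t : ℝ} (hcd : c < d)
    (hc : 0 < g c) (hd : 0 < g d)
    (hg : ∀ l ∈ Icc (0 : ℝ) 1, g (l * c + (1 - l) * d) ≤ g c ^ l * g d ^ (1 - l))
    (ht : t ∈ Icc c d) :
    g t ≤ (g c ^ d / g d ^ c) ^ (1 / (d - c)) * ((g d / g c) ^ (1 / (d - c))) ^ t := by
  have hdc : 0 < d - c := sub_pos.mpr hcd
  have hl : (d - t) / (d - c) ∈ Icc (0 : ℝ) 1 :=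
    ⟨div_nonneg (by linarith [ht.2]) hdc.le, (div_le_one hdc).mpr (by linarith [ht.1])⟩
  have hcomb : (d - t) / (d - c) * c + (1 - (d - t) / (d - c)) * d = t := by
    field_simp; ring
  have hcompl : 1 - (d - t) / (d - c) = (t - c) / (d - c) := by
    field_simp; ring
  have := hg _ hl
  rwa [hcomb, hcompl, rpow_div_mul_rpow_div_eq c d t hc hd hcd.ne] at this

theorem abs_integral_sub_mul_sub_mul_le_s9 {g : ℝ → ℝ} {c d A K : ℝ} (hcd : c ≤ d) (hK : 0 < K)
    (hK1 : K ≠ 1) (hg : ∀ t ∈ Icc c d, |g t| ≤ A * K ^ t) :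
    |∫ t in c..d, (t - c) * (d - t) * g t|
      ≤ A * ((2 * (K ^ c - K ^ d) + (d - c) * (K ^ c + K ^ d) * log K) / log K ^ 3) := by
  have hbound : ∀ t ∈ Ioc c d, ‖(t - c) * (d - t) * g t‖ ≤ A * ((t - c) * (d - t) * K ^ t) := by
    intro t ht
    have hw : 0 ≤ (t - c) * (d - t) := mul_nonneg (by linarith [ht.1]) (by linarith [ht.2])
    rw [Real.norm_eq_abs, abs_mul, abs_of_nonneg hw, mul_left_comm]
    exact mul_le_mul_of_nonneg_left (hg t (Ioc_subset_Icc_self ht)) hw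
  calc |∫ t in c..d, (t - c) * (d - t) * g t|
      ≤ ∫ t in c..d, A * ((t - c) * (d - t) * K ^ t) :=
        norm_integral_le_of_norm_le hcd (ae_of_all _ hbound)
          (Continuous.intervalIntegrable (by fun_prop (disch := exact hK.ne')) _ _)
    _ = _ := by rw [intervalIntegral.integral_const_mul, integral_sub_mul_sub_mul_rpow c d hK hK1]

theorem bullen_error_eq {f f' f'' : ℝ → ℝ} {a b : ℝ} (hab : a < b)
    (hf' : ∀ t ∈ Icc a b, HasDerivAt f (f' t) t)
    (hf'' : ∀ t ∈ Icc a b, HasDerivAt f' (f'' t) t)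
    (hint : IntegrableOn f'' (Icc a b)) :
    (1 / 2) * (f ((a + b) / 2) + (f a + f b) / 2) - (1 / (b - a)) * ∫ t in a..b, f t
      = ((∫ t in a..(a + b) / 2, (t - a) * ((a + b) / 2 - t) * f'' t)
          + ∫ t in (a + b) / 2..b, (t - (a + b) / 2) * (b - t) * f'' t) / (2 * (b - a)) := by
  have ham : a ≤ (a + b) / 2 := by linarith
  have hmb : (a + b) / 2 ≤ b := by linarith
  have hsub₁ : Icc a ((a + b) / 2) ⊆ Icc a b := Icc_subset_Icc le_rfl hmb
  have hsub₂ : Icc ((a + b) / 2) b ⊆ Icc a b := Icc_subset_Icc ham le_rfl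
  have hcont : ContinuousOn f (Icc a b) := fun t ht => (hf' t ht).continuousAt.continuousWithinAt
  have hsplit : ∫ t in a..b, f t = (∫ t in a..(a + b) / 2, f t) + ∫ t in (a + b) / 2..b, f t :=
    (integral_add_adjacent_intervals ((hcont.mono hsub₁).intervalIntegrable_of_Icc ham)
      ((hcont.mono hsub₂).intervalIntegrable_of_Icc hmb)).symm
  rw [← trapezoid_error_eq_integral_mul_deriv2 ham (fun t ht => hf' t (hsub₁ ht))
      (fun t ht => hf'' t (hsub₁ ht))
      ((intervalIntegrable_iff_integrableOn_Icc_of_le ham).mpr (hint.mono_set hsub₁)),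
    ← trapezoid_error_eq_integral_mul_deriv2 hmb (fun t ht => hf' t (hsub₂ ht))
      (fun t ht => hf'' t (hsub₂ ht))
      ((intervalIntegrable_iff_integrableOn_Icc_of_le hmb).mpr (hint.mono_set hsub₂)),
    hsplit]
  field_simp [(sub_pos.mpr hab).ne']
  ring

theorem logconvex_bullen (f f' f'' : ℝ → ℝ) (a b κ₁ τ₁ : ℝ)
    (hab : a < b)
    (hf' : ∀ t ∈ Set.Icc a b, HasDerivAt f (f' t) t)
    (hf'' : ∀ t ∈ Set.Icc a b, HasDerivAt f' (f'' t) t)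
    (hint : IntegrableOn f'' (Set.Icc a b))
    (hpos : ∀ t ∈ Set.Icc a b, 0 < |f'' t|)
    (hlc : ∀ u ∈ Set.Icc a b, ∀ v ∈ Set.Icc a b, ∀ l ∈ Set.Icc (0:ℝ) 1,
        |f'' (l * u + (1 - l) * v)| ≤ |f'' u| ^ l * |f'' v| ^ (1 - l))
    (hκ : κ₁ = (|f'' ((a + b) / 2)| / |f'' a|) ^ (2 / (b - a)))
    (hτ : τ₁ = (|f'' b| / |f'' ((a + b) / 2)|) ^ (2 / (b - a)))
    (hκ1 : κ₁ ≠ 1) (hτ1 : τ₁ ≠ 1) :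
    |(1 / 2) * (f ((a + b) / 2) + (f a + f b) / 2) - (1 / (b - a)) * ∫ t in a..b, f t|
      ≤ (|f'' a| ^ ((a + b) / 2) / |f'' ((a + b) / 2)| ^ a) ^ (2 / (b - a))
            * ((κ₁ ^ a - κ₁ ^ ((a + b) / 2)
                + ((b - a) / 4) * (κ₁ ^ a + κ₁ ^ ((a + b) / 2)) * Real.log κ₁)
                / ((b - a) * (Real.log κ₁) ^ 3))
        + (|f'' ((a + b) / 2)| ^ b / |f'' b| ^ ((a + b) / 2)) ^ (2 / (b - a))
            * ((τ₁ ^ ((a + b) / 2) - τ₁ ^ b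
                + ((b - a) / 4) * (τ₁ ^ b + τ₁ ^ ((a + b) / 2)) * Real.log τ₁)
                / ((b - a) * (Real.log τ₁) ^ 3)) := by
  have ham : a < (a + b) / 2 := by linarith
  have hmb : (a + b) / 2 < b := by linarith
  have ha : a ∈ Icc a b := ⟨le_rfl, hab.le⟩
  have hm : (a + b) / 2 ∈ Icc a b := ⟨ham.le, hmb.le⟩
  have hb : b ∈ Icc a b := ⟨hab.le, le_rfl⟩
  have hκpos : 0 < κ₁ := hκ ▸ rpow_pos_of_pos (div_pos (hpos _ hm) (hpos a ha)) _
  have hτpos : 0 < τ₁ := hτ ▸ rpow_pos_of_pos (div_pos (hpos b hb) (hpos _ hm)) _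
  have hbound₁ : ∀ t ∈ Icc a ((a + b) / 2),
      |f'' t| ≤ (|f'' a| ^ ((a + b) / 2) / |f'' ((a + b) / 2)| ^ a) ^ (2 / (b - a)) * κ₁ ^ t := by
    intro t ht
    have h := le_mul_rpow_of_logConvex (g := fun t => |f'' t|) ham (hpos a ha) (hpos _ hm)
      (hlc a ha _ hm) ht
    rwa [show 1 / ((a + b) / 2 - a) = 2 / (b - a) by field_simp; ring, ← hκ] at h
  have hbound₂ : ∀ t ∈ Icc ((a + b) / 2) b,
      |f'' t| ≤ (|f'' ((a + b) / 2)| ^ b / |f'' b| ^ ((a + b) / 2)) ^ (2 / (b - a)) * τ₁ ^ t := by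
    intro t ht
    have h := le_mul_rpow_of_logConvex (g := fun t => |f'' t|) hmb (hpos _ hm) (hpos b hb)
      (hlc _ hm b hb) ht
    rwa [show 1 / (b - (a + b) / 2) = 2 / (b - a) by field_simp; ring, ← hτ] at h
  rw [bullen_error_eq hab hf' hf'' hint, abs_div, abs_of_pos (by linarith : 0 < 2 * (b - a))]
  refine (div_le_div_of_nonneg_right ((abs_add_le _ _).trans (add_le_add
    (abs_integral_sub_mul_sub_mul_le_s9 ham.le hκpos hκ1 hbound₁)
    (abs_integral_sub_mul_sub_mul_le_s9 hmb.le hτpos hτ1 hbound₂))) (by linarith)).trans_eq ?_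
  field_simp [(sub_pos.mpr hab).ne', log_ne_zero_of_pos_of_ne_one hκpos hκ1,
    log_ne_zero_of_pos_of_ne_one hτpos hτ1]
  ring
end

section
/- Let s ∈ (0,1], a, b, c ∈ ℝ with b ≥ 0 and 0 ≤ c ≤ a, and define f : [0,∞) → ℝ by f(0) = a and f(t) = b·t^s + c for t > 0. Then f is s-convex in the second sense, i.e., f(tx + (1-t)y) ≤ t^s f(x) + (1-t)^s f(y) for all x, y ∈ [0,∞) and t ∈ [0,1]. -/
/-! The power function `u ↦ u ^ s` is s-convex by the subadditivity `(p + q) ^ s ≤ p ^ s + q ^ s`,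
and s-convexity is preserved by nonnegative multiples and by adding a nonnegative constant, the
latter because `t ^ s + (1 - t) ^ s ≥ 1`. So `u ↦ b * u ^ s + c` is s-convex; `f` agrees with it
on `(0, ∞)` and only raises its value at `0` to `a ≥ c`. Raising the value at `0` costs nothing
on the left-hand side unless `t * x + (1 - t) * y = 0`, and then either one weight vanishes or
`x = y = 0`, where `a ≤ (t ^ s + (1 - t) ^ s) * a` because `a ≥ 0`. -/

open Real Set

def SConvexSecondSense (s : ℝ) (f : ℝ → ℝ) : Prop :=
  ∀ x : ℝ, 0 ≤ x → ∀ y : ℝ, 0 ≤ y → ∀ t ∈ Icc (0:ℝ) 1,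
    f (t * x + (1 - t) * y) ≤ t ^ s * f x + (1 - t) ^ s * f y

lemma one_le_rpow_add_one_sub_rpow {s t : ℝ} (hs : s ≤ 1) (ht : t ∈ Icc (0:ℝ) 1) :
    1 ≤ t ^ s + (1 - t) ^ s := by
  have h₁ := self_le_rpow_of_le_one ht.1 ht.2 hs
  have h₂ := self_le_rpow_of_le_one (sub_nonneg.2 ht.2) (by linarith [ht.1]) hs
  linarith

namespace SConvexSecondSense

variable {s : ℝ} {f g : ℝ → ℝ}

lemma rpow (hs₀ : 0 ≤ s) (hs₁ : s ≤ 1) : SConvexSecondSense s (fun u => u ^ s) := by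
  intro x hx y hy t ht
  have ht' : 0 ≤ 1 - t := sub_nonneg.2 ht.2
  calc (t * x + (1 - t) * y) ^ s ≤ (t * x) ^ s + ((1 - t) * y) ^ s :=
        rpow_add_le_add_rpow (mul_nonneg ht.1 hx) (mul_nonneg ht' hy) hs₀ hs₁
    _ = t ^ s * x ^ s + (1 - t) ^ s * y ^ s := by rw [mul_rpow ht.1 hx, mul_rpow ht' hy]

lemma const (hs : s ≤ 1) {c : ℝ} (hc : 0 ≤ c) : SConvexSecondSense s (fun _ => c) := by
  intro x _ y _ t ht
  have := one_le_rpow_add_one_sub_rpow hs ht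
  nlinarith

lemma add (hf : SConvexSecondSense s f) (hg : SConvexSecondSense s g) :
    SConvexSecondSense s (f + g) := by
  intro x hx y hy t ht
  have := hf x hx y hy t ht
  have := hg x hx y hy t ht
  simp only [Pi.add_apply]
  linarith

lemma const_mul (hf : SConvexSecondSense s f) {b : ℝ} (hb : 0 ≤ b) :
    SConvexSecondSense s (fun u => b * f u) := by
  intro x hx y hy t ht
  calc b * f (t * x + (1 - t) * y) ≤ b * (t ^ s * f x + (1 - t) ^ s * f y) :=
        mul_le_mul_of_nonneg_left (hf x hx y hy t ht) hb
    _ = t ^ s * (b * f x) + (1 - t) ^ s * (b * f y) := by ring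

lemma of_eqOn_Ioi (hg : SConvexSecondSense s g) (hs₀ : 0 < s) (hs₁ : s ≤ 1)
    (hfg : EqOn f g (Ioi 0)) (hg₀ : g 0 ≤ f 0) (hf₀ : 0 ≤ f 0) :
    SConvexSecondSense s f := by
  have hgf : ∀ u, 0 ≤ u → g u ≤ f u := by
    intro u hu
    rcases hu.eq_or_lt with rfl | hu
    · exact hg₀
    · exact (hfg hu).ge
  intro x hx y hy t ht
  have ht' : 0 ≤ 1 - t := sub_nonneg.2 ht.2
  have htx := mul_nonneg ht.1 hx
  have hty := mul_nonneg ht' hy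
  rcases (add_nonneg htx hty).eq_or_lt with hz | hz
  · rw [← hz]
    rcases ht.1.eq_or_lt with rfl | ht₀
    · obtain rfl : y = 0 := by nlinarith
      simp [zero_rpow hs₀.ne']
    rcases ht.2.eq_or_lt with rfl | ht₁
    · obtain rfl : x = 0 := by nlinarith
      simp [zero_rpow hs₀.ne']
    obtain rfl : x = 0 := by nlinarith
    obtain rfl : y = 0 := by nlinarith
    have := one_le_rpow_add_one_sub_rpow hs₁ ht
    nlinarith
  · calc f (t * x + (1 - t) * y) = g (t * x + (1 - t) * y) := hfg hz
      _ ≤ t ^ s * g x + (1 - t) ^ s * g y := hg x hx y hy t ht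
      _ ≤ t ^ s * f x + (1 - t) ^ s * f y :=
          add_le_add (mul_le_mul_of_nonneg_left (hgf x hx) (rpow_nonneg ht.1 s))
            (mul_le_mul_of_nonneg_left (hgf y hy) (rpow_nonneg ht' s))

end SConvexSecondSense

theorem hudzik_example_sconvex (s a b c : ℝ) (f : ℝ → ℝ)
    (hs : s ∈ Set.Ioc (0:ℝ) 1) (hb : 0 ≤ b) (hc0 : 0 ≤ c) (hca : c ≤ a)
    (hf0 : f 0 = a) (hft : ∀ t : ℝ, 0 < t → f t = b * t ^ s + c) :
    ∀ x : ℝ, 0 ≤ x → ∀ y : ℝ, 0 ≤ y → ∀ t ∈ Set.Icc (0:ℝ) 1,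
      f (t * x + (1 - t) * y) ≤ t ^ s * f x + (1 - t) ^ s * f y := by
  obtain ⟨hs₀, hs₁⟩ := hs
  have hg : SConvexSecondSense s (fun u => b * u ^ s + c) :=
    ((SConvexSecondSense.rpow hs₀.le hs₁).const_mul hb).add (SConvexSecondSense.const hs₁ hc0)
  refine hg.of_eqOn_Ioi hs₀ hs₁ (fun u hu => hft u hu) ?_ (by linarith)
  simp [zero_rpow hs₀.ne', hf0, hca]
end

section
/- Let s ∈ (0,1), b > 0 and c < 0 be reals, a ∈ ℝ, and define f : [0,∞) → ℝ by f(0) = a and f(t) = b·t^s + c for t > 0. Then f is not s-convex in the second sense. -/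
/-! For `s < 1` an `s`-convex function in the second sense is nonnegative: taking `x = y` and
`t = 1/2` gives `f x ≤ 2 ^ (1 - s) * f x` with `2 ^ (1 - s) > 1`. But `b * t ^ s + c` is negative
for small `t > 0`. -/

open Real

def IsSConvexSecondSense (s : ℝ) (f : ℝ → ℝ) : Prop :=
  ∀ x : ℝ, 0 ≤ x → ∀ y : ℝ, 0 ≤ y → ∀ t ∈ Set.Icc (0:ℝ) 1,
    f (t * x + (1 - t) * y) ≤ t ^ s * f x + (1 - t) ^ s * f y

lemma one_lt_two_mul_half_rpow {s : ℝ} (hs : s < 1) : 1 < 2 * (1 / 2 : ℝ) ^ s := by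
  have : (1 / 2 : ℝ) ^ (1 : ℝ) < (1 / 2) ^ s :=
    rpow_lt_rpow_of_exponent_gt (by norm_num) (by norm_num) hs
  rw [rpow_one] at this
  linarith

lemma IsSConvexSecondSense.nonneg {s : ℝ} {f : ℝ → ℝ} (hf : IsSConvexSecondSense s f)
    (hs : s < 1) {x : ℝ} (hx : 0 ≤ x) : 0 ≤ f x := by
  have hmid := hf x hx x hx (1 / 2) ⟨by norm_num, by norm_num⟩
  have hx_eq : (1 / 2 : ℝ) * x + (1 - 1 / 2) * x = x := by ring
  rw [hx_eq, show (1 : ℝ) - 1 / 2 = 1 / 2 by norm_num] at hmid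
  nlinarith [one_lt_two_mul_half_rpow hs]

lemma exists_pos_mul_rpow_add_neg {s b c : ℝ} (hs : 0 < s) (hb : 0 < b) (hc : c < 0) :
    ∃ u > 0, b * u ^ s + c < 0 := by
  have hq : 0 < -c / (2 * b) := div_pos (by linarith) (by linarith)
  refine ⟨(-c / (2 * b)) ^ (1 / s), rpow_pos_of_pos hq _, ?_⟩
  rw [← rpow_mul hq.le, one_div, inv_mul_cancel₀ hs.ne', rpow_one]
  field_simp
  linarith

theorem hudzik_example_not_sconvex_general (s b c : ℝ) (f : ℝ → ℝ)
    (hs : s ∈ Set.Ioo (0:ℝ) 1) (hb : 0 < b) (hc : c < 0)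
    (hft : ∀ t : ℝ, 0 < t → f t = b * t ^ s + c) :
    ¬ (∀ x : ℝ, 0 ≤ x → ∀ y : ℝ, 0 ≤ y → ∀ t ∈ Set.Icc (0:ℝ) 1,
      f (t * x + (1 - t) * y) ≤ t ^ s * f x + (1 - t) ^ s * f y) := by
  intro hconv
  obtain ⟨u, hu, hfu_neg⟩ := exists_pos_mul_rpow_add_neg hs.1 hb hc
  have hfu_nonneg : 0 ≤ f u := IsSConvexSecondSense.nonneg hconv hs.2 hu.le
  rw [hft u hu] at hfu_nonneg
  linarith

theorem hudzik_example_not_sconvex (s a b c : ℝ) (f : ℝ → ℝ)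
    (hs : s ∈ Set.Ioo (0:ℝ) 1) (hb : 0 < b) (hc : c < 0)
    (hf0 : f 0 = a) (hft : ∀ t : ℝ, 0 < t → f t = b * t ^ s + c) :
    ¬ (∀ x : ℝ, 0 ≤ x → ∀ y : ℝ, 0 ≤ y → ∀ t ∈ Set.Icc (0:ℝ) 1,
      f (t * x + (1 - t) * y) ≤ t ^ s * f x + (1 - t) ^ s * f y) :=
  hudzik_example_not_sconvex_general s b c f hs hb hc hft
end

section
/- If s ∈ (0,1) and f : [0,∞) → ℝ is s-convex in the second sense, then f is nonnegative, i.e., f(x) ≥ 0 for all x ∈ [0,∞). -/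
open Real

/-! Taking `x = y` in the defining inequality gives `f x ≤ (t ^ s + (1 - t) ^ s) * f x`, and for
`s < 1` the factor `t ^ s + (1 - t) ^ s` exceeds `1`, because `t < t ^ s` and `1 - t < (1 - t) ^ s`. -/

theorem one_lt_rpow_add_one_sub_rpow {s t : ℝ} (hs : s < 1) (ht : t ∈ Set.Ioo (0 : ℝ) 1) :
    1 < t ^ s + (1 - t) ^ s := by
  have hlt : t < t ^ s := self_lt_rpow_of_lt_one ht.1 ht.2 hs
  have hlt' : 1 - t < (1 - t) ^ s :=
    self_lt_rpow_of_lt_one (by linarith [ht.2]) (by linarith [ht.1]) hs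
  linarith

theorem nonneg_of_le_mul_of_one_lt {R : Type*} [Ring R] [LinearOrder R] [IsStrictOrderedRing R]
    {a c : R} (h : a ≤ c * a) (hc : 1 < c) : 0 ≤ a :=
  nonneg_of_mul_nonneg_right (by rw [sub_mul, one_mul]; exact sub_nonneg.2 h) (sub_pos.2 hc)

theorem sconvex_nonneg (s : ℝ) (f : ℝ → ℝ)
    (hs : s ∈ Set.Ioo (0:ℝ) 1)
    (hsc : ∀ x : ℝ, 0 ≤ x → ∀ y : ℝ, 0 ≤ y → ∀ t ∈ Set.Icc (0:ℝ) 1,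
      f (t * x + (1 - t) * y) ≤ t ^ s * f x + (1 - t) ^ s * f y) :
    ∀ x : ℝ, 0 ≤ x → 0 ≤ f x := by
  intro x hx
  have hdiag : f x ≤ ((1 / 2 : ℝ) ^ s + (1 - 1 / 2) ^ s) * f x := by
    have h := hsc x hx x hx (1 / 2) ⟨by norm_num, by norm_num⟩
    rwa [← add_mul, ← add_mul, add_sub_cancel, one_mul] at h
  exact nonneg_of_le_mul_of_one_lt hdiag
    (one_lt_rpow_add_one_sub_rpow hs.2 ⟨by norm_num, by norm_num⟩)
end

section
/- Let f : [a,b] → ℝ be convex. Then Bullen's inequality holds: (1/(b-a))∫_a^b f(x)dx ≤ (1/2)[f((a+b)/2) + (f(a)+f(b))/2]. -/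
/-!
Convexity puts f below its chord on any subinterval, and integrating the chord gives the trapezoid
bound `∫_a^b f ≤ (b - a)(f a + f b)/2`. Applying this on the two halves `[a, m]` and `[m, b]`,
`m = (a + b)/2`, and adding yields `(b - a)/4 · (f a + 2 f m + f b)`, which is Bullen's bound.
-/

open MeasureTheory intervalIntegral

theorem ConvexOn.le_chord {f : ℝ → ℝ} {a b x : ℝ} (hab : a < b)
    (hf : ConvexOn ℝ (Set.Icc a b) f) (hx : x ∈ Set.Icc a b) :
    f x ≤ ((b - x) * f a + (x - a) * f b) / (b - a) := by
  obtain ⟨hax, hxb⟩ := hx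
  have hba : 0 < b - a := sub_pos.2 hab
  have hcombo : ((b - x) / (b - a)) • a + ((x - a) / (b - a)) • b = x := by
    simp only [smul_eq_mul]; field_simp; ring
  calc f x = f (((b - x) / (b - a)) • a + ((x - a) / (b - a)) • b) := by rw [hcombo]
    _ ≤ ((b - x) / (b - a)) • f a + ((x - a) / (b - a)) • f b :=
        hf.2 (Set.left_mem_Icc.2 hab.le) (Set.right_mem_Icc.2 hab.le)
          (div_nonneg (by linarith) hba.le) (div_nonneg (by linarith) hba.le)
          (by field_simp; ring)
    _ = ((b - x) * f a + (x - a) * f b) / (b - a) := by simp only [smul_eq_mul]; ring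

theorem integral_chord {a b : ℝ} (hab : a ≠ b) (u v : ℝ) :
    ∫ x in a..b, ((b - x) * u + (x - a) * v) / (b - a) = (b - a) * (u + v) / 2 := by
  have hba : b - a ≠ 0 := sub_ne_zero.2 hab.symm
  have haffine : (fun x => ((b - x) * u + (x - a) * v) / (b - a))
      = fun x => (b * u - a * v) / (b - a) + (v - u) / (b - a) * x := by
    funext x; field_simp; ring
  rw [haffine,
    integral_add intervalIntegrable_const ((continuous_const_mul _).intervalIntegrable a b),
    intervalIntegral.integral_const, intervalIntegral.integral_const_mul, integral_id, smul_eq_mul]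
  field_simp
  ring

theorem ConvexOn.integral_le_trapezoid {f : ℝ → ℝ} {a b : ℝ} (hab : a < b)
    (hf : ConvexOn ℝ (Set.Icc a b) f) (hint : IntervalIntegrable f volume a b) :
    ∫ x in a..b, f x ≤ (b - a) * (f a + f b) / 2 :=
  calc ∫ x in a..b, f x ≤ ∫ x in a..b, ((b - x) * f a + (x - a) * f b) / (b - a) :=
        integral_mono_on hab.le hint (Continuous.intervalIntegrable (by fun_prop) a b)
          fun _ hx => hf.le_chord hab hx
    _ = (b - a) * (f a + f b) / 2 := integral_chord hab.ne _ _

theorem bullen_inequality (f : ℝ → ℝ) (a b : ℝ) (hab : a < b)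
    (hf : ConvexOn ℝ (Set.Icc a b) f)
    (hint : IntervalIntegrable f MeasureTheory.volume a b) :
    (1 / (b - a)) * ∫ x in a..b, f x
      ≤ (1 / 2) * (f ((a + b) / 2) + (f a + f b) / 2) := by
  set m := (a + b) / 2 with hm_def
  have ham : a < m := by rw [hm_def]; linarith
  have hmb : m < b := by rw [hm_def]; linarith
  have hm : m ∈ Set.uIcc a b := Set.mem_uIcc_of_le ham.le hmb.le
  have hint₁ : IntervalIntegrable f volume a m :=
    hint.mono_set (Set.uIcc_subset_uIcc_left hm)
  have hint₂ : IntervalIntegrable f volume m b :=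
    hint.mono_set (Set.uIcc_subset_uIcc_right hm)
  have htrap₁ :=
    (hf.subset (Set.Icc_subset_Icc_right hmb.le) (convex_Icc a m)).integral_le_trapezoid ham hint₁
  have htrap₂ :=
    (hf.subset (Set.Icc_subset_Icc_left ham.le) (convex_Icc m b)).integral_le_trapezoid hmb hint₂
  rw [← integral_add_adjacent_intervals hint₁ hint₂, one_div, inv_mul_le_iff₀ (by linarith)]
  have hma : m - a = (b - a) / 2 := by rw [hm_def]; ring
  have hbm : b - m = (b - a) / 2 := by rw [hm_def]; ring
  rw [hma] at htrap₁
  rw [hbm] at htrap₂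
  linarith
end
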